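/- Let G be a perfect-information stochastic game with finitely many vertices and a tail winning condition W. Then for every vertex v: if v ∈ V_Max then val(v) = max over edges (v,w) ∈ E of val(w); if v ∈ V_min then val(v) = min over edges (v,w) ∈ E of val(w); and if v ∈ V_R then val(v) = Σ_{(v,w)∈E} p(w|v)·val(w). -/

import Mathlib

open MeasureTheory ProbabilityTheory Filter Topology

attribute [local instance] Classical.propDecidable

namespace StochasticGames

/-- A perfect-information stochastic game arena: a partition of the finite vertex set into
Max vertices, min vertices and random vertices, an edge relation such that every vertex has
an outgoing edge, and transition probabilities at random vertices, positive exactly on edges. -/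
structure Game (V : Type) [Fintype V] where
  VMax : Set V
  Vmin : Set V
  VR : Set V
  E : V → V → Prop
  p : V → V → ℝ
  cover : ∀ v, v ∈ VMax ∨ v ∈ Vmin ∨ v ∈ VR
  disjMm : Disjoint VMax Vmin
  disjMR : Disjoint VMax VR
  disjmR : Disjoint Vmin VR
  succ_exists : ∀ v, ∃ w, E v w
  p_nonneg : ∀ v ∈ VR, ∀ w, 0 ≤ p v w
  p_sum : ∀ v ∈ VR, ∑ w, p v w = 1
  p_pos_iff : ∀ v ∈ VR, ∀ w, (0 < p v w ↔ E v w)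

variable {V : Type} [Fintype V] [MeasurableSpace V] [DiscreteMeasurableSpace V]

/-- The cylinder of plays starting with the finite word `h`. -/
def cyl (h : List V) : Set (ℕ → V) :=
  {ω | ∀ i : Fin h.length, ω i = h.get i}

/-- Prepend a finite word to an infinite word. -/
def prepend (h : List V) (q : ℕ → V) : ℕ → V :=
  fun n => if hn : n < h.length then h.get ⟨n, hn⟩ else q (n - h.length)

/-- A winning condition is tail if it is invariant under adding/removing finite prefixes. -/
def IsTail (W : Set (ℕ → V)) : Prop :=
  ∀ (h : List V) (q : ℕ → V), q ∈ W ↔ prepend h q ∈ W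

/-- A finite play: a nonempty word whose consecutive vertices are linked by edges. -/
def Game.FinitePlay (G : Game V) (h : List V) : Prop :=
  h ≠ [] ∧ h.Chain' G.E

/-- A strategy for player Max: after any finite play ending in a Max vertex,
it chooses a successor along an edge. -/
def Game.IsMaxStrategy (G : Game V) (σ : List V → V) : Prop :=
  ∀ h : List V, G.FinitePlay h → ∀ v, h.getLast? = some v → v ∈ G.VMax → G.E v (σ h)

/-- A strategy for player min. -/
def Game.IsMinStrategy (G : Game V) (τ : List V → V) : Prop :=
  ∀ h : List V, G.FinitePlay h → ∀ v, h.getLast? = some v → v ∈ G.Vmin → G.E v (τ h)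

/-- `μ` is the probability measure on plays induced by the initial vertex `v` and the
strategies `σ` (for Max) and `τ` (for min): the play starts at `v` almost surely and,
conditionally on any finite prefix of positive probability, the next vertex is chosen by
`σ`, by `τ`, or according to `G.p`, depending on the owner of the current vertex. -/
def Game.IsInduced (G : Game V) (σ τ : List V → V) (v : V) (μ : Measure (ℕ → V)) : Prop :=
  IsProbabilityMeasure μ ∧
  μ {ω | ω 0 = v} = 1 ∧
  ∀ (h : List V) (u : V), h.getLast? = some u → μ (cyl h) ≠ 0 →
    (u ∈ G.VMax → ProbabilityTheory.cond μ (cyl h) {ω | ω h.length = σ h} = 1) ∧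
    (u ∈ G.Vmin → ProbabilityTheory.cond μ (cyl h) {ω | ω h.length = τ h} = 1) ∧
    (u ∈ G.VR → ∀ w, ProbabilityTheory.cond μ (cyl h) {ω | ω h.length = w} =
      ENNReal.ofReal (G.p u w))

/-- A family of measures indexed by a pair of strategies and an initial vertex. -/
abbrev StratFam (V : Type) [MeasurableSpace V] :=
  (List V → V) → (List V → V) → V → Measure (ℕ → V)

/-- `P` assigns to every pair of strategies and every initial vertex the induced
probability measure on plays. -/
def Game.IsInducedFam (G : Game V) (P : StratFam V) : Prop :=
  ∀ σ τ v, G.IsInduced σ τ v (P σ τ v)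

/-- The value of a vertex: `val(v) = sup_σ inf_τ P^{σ,τ}_v(W)`. -/
noncomputable def Game.val (G : Game V) (W : Set (ℕ → V)) (P : StratFam V) (v : V) : ℝ :=
  ⨆ σ : {σ // G.IsMaxStrategy σ}, ⨅ τ : {τ // G.IsMinStrategy τ}, (P σ.1 τ.1 v W).toReal

/-- An optimal strategy for Max: it guarantees winning with probability `val(v)` from
every vertex `v`. -/
def Game.OptimalMax (G : Game V) (W : Set (ℕ → V)) (P : StratFam V) (σ : List V → V) : Prop :=
  G.IsMaxStrategy σ ∧
  ∀ v, (⨅ τ : {τ // G.IsMinStrategy τ}, (P σ τ.1 v W).toReal) = G.val W P v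

/-- An optimal strategy for min. -/
def Game.OptimalMin (G : Game V) (W : Set (ℕ → V)) (P : StratFam V) (τ : List V → V) : Prop :=
  G.IsMinStrategy τ ∧
  ∀ v, (⨆ σ : {σ // G.IsMaxStrategy σ}, (P σ.1 τ v W).toReal) = G.val W P v

/-- An `ε`-optimal strategy for Max. -/
def Game.EpsOptimalMax (G : Game V) (W : Set (ℕ → V)) (P : StratFam V) (ε : ℝ)
    (σ : List V → V) : Prop :=
  G.IsMaxStrategy σ ∧
  ∀ v, G.val W P v - ε ≤ ⨅ τ : {τ // G.IsMinStrategy τ}, (P σ τ.1 v W).toReal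

/-- A game is consistent if no edge out of a Max or min vertex changes the value. -/
def Game.Consistent (G : Game V) (W : Set (ℕ → V)) (P : StratFam V) : Prop :=
  ∀ v w, G.E v w → (v ∈ G.VMax ∨ v ∈ G.Vmin) → G.val W P v = G.val W P w

/-- The quality of the strategy `σ` after a finite play `v₀ v₁ ⋯ vₙ`:
`inf_τ P^{σ,τ}_{v₀}(W ∣ V₀ = v₀, …, Vₙ = vₙ)`. -/
noncomputable def Game.qual (G : Game V) (W : Set (ℕ → V)) (P : StratFam V)
    (σ : List V → V) : List V → ℝ
  | [] => 0
  | v :: l => ⨅ τ : {τ // G.IsMinStrategy τ},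
      (ProbabilityTheory.cond (P σ τ.1 v) (cyl (v :: l)) W).toReal

/-- The finite play `ω 0, ω 1, …, ω n`. -/
def prefixList (ω : ℕ → V) (n : ℕ) : List V := List.ofFn (fun i : Fin (n + 1) => ω i)

/-- The deviation date: the first time the quality of `σ` drops at least `m/2` below the
value of the current vertex (`∞` if this never happens). -/
noncomputable def Game.resetTime (G : Game V) (W : Set (ℕ → V)) (P : StratFam V)
    (σ : List V → V) (m : ℝ) (ω : ℕ → V) : ℕ∞ :=
  sInf ((fun n : ℕ => (n : ℕ∞)) ''
    {n | G.qual W P σ (prefixList ω n) ≤ G.val W P (ω n) - m / 2})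

/-- The date `t(v₀,…,vₙ)` of the latest deviation before date `n`, along the play `ω`. -/
noncomputable def Game.lastDevAux (G : Game V) (W : Set (ℕ → V)) (P : StratFam V)
    (σ : List V → V) (m : ℝ) (ω : ℕ → V) : ℕ → ℕ
  | 0 => 0
  | n + 1 =>
    let t := G.lastDevAux W P σ m ω n
    if G.val W P (ω (n + 1)) - m / 2 ≤ G.qual W P σ ((prefixList ω (n + 1)).drop t)
    then t else n + 1

/-- The date of the latest deviation, as a function of the finite play `h`. -/
noncomputable def Game.lastDev [Inhabited V] (G : Game V) (W : Set (ℕ → V)) (P : StratFam V)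
    (σ : List V → V) (m : ℝ) (h : List V) : ℕ :=
  G.lastDevAux W P σ m (fun i => h.getD i default) (h.length - 1)

/-- The reset strategy `σ'`: forget everything before the latest deviation and apply `σ`. -/
noncomputable def Game.resetStrat [Inhabited V] (G : Game V) (W : Set (ℕ → V))
    (P : StratFam V) (σ : List V → V) (m : ℝ) : List V → V :=
  fun h => σ (h.drop (G.lastDev W P σ m h))

/-- The σ-algebra generated by the coordinates `V₀, …, Vₙ`. -/
def hist (V : Type) [MeasurableSpace V] (n : ℕ) : MeasurableSpace (ℕ → V) :=
  MeasurableSpace.comap (fun ω (i : Fin (n + 1)) => ω i) inferInstance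

/-- The strategy `σ[h]` shifted by the finite play `h`:
`σ[h](w₀w₁⋯wₖ) = σ(v₀⋯vₙw₁⋯wₖ)` where `h = v₀⋯vₙ`. -/
def shiftStrat (s : List V → V) (h : List V) : List V → V := fun l => s (h ++ l.drop 1)

/-- The function `φ[h]` shifted by the finite play `h`:
`φ[h](w₀w₁w₂⋯) = φ(v₀⋯vₙw₁w₂⋯)` where `h = v₀⋯vₙ`. -/
def shiftFun {α : Type} (φ : (ℕ → V) → α) (h : List V) : (ℕ → V) → α :=
  fun q => φ (prepend h (fun n => q (n + 1)))

/-- A superfluous edge: a move of Max decreasing the value, or a move of min increasing it. -/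
def Game.Superfluous (G : Game V) (W : Set (ℕ → V)) (P : StratFam V) (v w : V) : Prop :=
  (v ∈ G.VMax ∧ G.val W P w < G.val W P v) ∨ (v ∈ G.Vmin ∧ G.val W P v < G.val W P w)

end StochasticGames

/-!
Conditioning the play on its first move `v → w` and shifting it by one step turns the measure
induced by `σ, τ` from `v` into the measure induced from `w` by the residual strategies; as `W` is
tail, the shift does not change membership in `W`. So the winning probability from `v` is the
average, under the law of the first move, of the winning probabilities from the successors.
Putting `ε`-optimal strategies of the successors behind a first move gives both inequalities at
each kind of vertex. Comparing glued, residual and original strategies is possible because an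
induced measure is determined by its values on cylinders, hence by the strategies along the plays
from the initial vertex only.
-/

namespace StochasticGames

section Cylinders

variable {V : Type}

def shift (ω : ℕ → V) : ℕ → V := fun n => ω (n + 1)

lemma cyl_nil : cyl ([] : List V) = Set.univ := by
  simp [cyl]

lemma cyl_cons (a : V) (h : List V) :
    cyl (a :: h) = {ω | ω 0 = a} ∩ shift ⁻¹' cyl h := by
  ext ω
  simp [cyl, Fin.forall_fin_succ, shift]

lemma cyl_singleton (a : V) : cyl [a] = {ω | ω 0 = a} := by
  simp [cyl_cons, cyl_nil]

lemma cyl_append (h : List V) (w : V) :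
    cyl (h ++ [w]) = cyl h ∩ {ω | ω h.length = w} := by
  induction h with
  | nil => simp [cyl_singleton, cyl_nil]
  | cons a t ih =>
    rw [List.cons_append, cyl_cons, ih, cyl_cons]
    ext ω
    simp [shift, and_assoc]

lemma iUnion_cyl_append (h : List V) : ⋃ w, cyl (h ++ [w]) = cyl h := by
  ext ω
  simp [cyl_append]

lemma pairwise_disjoint_cyl_append (h : List V) :
    Pairwise (Function.onFun Disjoint fun w => cyl (h ++ [w])) := by
  intro w w' hne
  simp only [Function.onFun, cyl_append]
  exact Set.disjoint_left.2 fun ω hω hω' => hne (hω.2.symm.trans hω'.2)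

lemma cyl_subset_cyl_of_mem {h₁ h₂ : List V} {ω : ℕ → V} (hω₁ : ω ∈ cyl h₁)
    (hω₂ : ω ∈ cyl h₂) (hl : h₁.length ≤ h₂.length) : cyl h₂ ⊆ cyl h₁ := by
  intro ρ hρ i
  have hi : (i : ℕ) < h₂.length := i.2.trans_le hl
  calc ρ i = h₂.get ⟨i, hi⟩ := hρ ⟨i, hi⟩
    _ = ω i := (hω₂ ⟨i, hi⟩).symm
    _ = h₁.get i := hω₁ i

lemma isPiSystem_cyl : IsPiSystem (Set.range (cyl (V := V))) := by
  rintro _ ⟨h₁, rfl⟩ _ ⟨h₂, rfl⟩ ⟨ω, hω₁, hω₂⟩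
  rcases le_total h₁.length h₂.length with hl | hl
  · exact ⟨h₂, (Set.inter_eq_right.2 (cyl_subset_cyl_of_mem hω₁ hω₂ hl)).symm⟩
  · exact ⟨h₁, (Set.inter_eq_left.2 (cyl_subset_cyl_of_mem hω₂ hω₁ hl)).symm⟩

lemma cyl_pair_inter_shift_preimage (v w : V) (t : List V) :
    cyl [v, w] ∩ shift ⁻¹' cyl (w :: t) = cyl (v :: w :: t) := by
  ext ω
  simp only [cyl_cons, cyl_nil, Set.mem_inter_iff, Set.mem_preimage, Set.mem_ofPred_eq]
  tauto

lemma cyl_pair_inter_shift_preimage_of_ne {v w b : V} (hb : b ≠ w) (t : List V) :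
    cyl [v, w] ∩ shift ⁻¹' cyl (b :: t) = ∅ := by
  ext ω
  simp only [cyl_cons, Set.mem_inter_iff, Set.mem_preimage, Set.mem_ofPred_eq]
  grind

lemma IsTail.shift_mem_iff {W : Set (ℕ → V)} (hW : IsTail W) (ω : ℕ → V) :
    shift ω ∈ W ↔ ω ∈ W := by
  convert hW [ω 0] (shift ω) using 2
  funext n
  cases n <;> simp [prepend, shift]

variable [MeasurableSpace V]

lemma measurable_shift : Measurable (shift (V := V)) :=
  measurable_pi_lambda _ fun n => measurable_pi_apply (n + 1)

variable [MeasurableSingletonClass V]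

lemma measurableSet_eval_eq (n : ℕ) (w : V) : MeasurableSet {ω : ℕ → V | ω n = w} :=
  (measurableSet_singleton w).preimage (measurable_pi_apply n)

lemma measurableSet_cyl (h : List V) : MeasurableSet (cyl h) := by
  induction h with
  | nil => simp [cyl_nil]
  | cons a t ih => rw [cyl_cons]; exact (measurableSet_eval_eq 0 a).inter (measurable_shift ih)

lemma generateFrom_cyl [Countable V] :
    (inferInstance : MeasurableSpace (ℕ → V)) =
      MeasurableSpace.generateFrom (Set.range (cyl (V := V))) := by
  refine le_antisymm (iSup_le fun n => MeasurableSpace.comap_le_iff_le_map.2 ?_)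
    (MeasurableSpace.generateFrom_le ?_)
  · refine @measurable_to_countable' V (ℕ → V) _ _ (.generateFrom _) _ fun a => ?_
    have hfiber : (fun ω : ℕ → V => ω n) ⁻¹' {a} =
        ⋃ t : Fin n → V, cyl (List.ofFn t ++ [a]) := by
      ext ω
      simp only [Set.mem_preimage, Set.mem_singleton_iff, Set.mem_iUnion, cyl_append,
        Set.mem_inter_iff, Set.mem_ofPred_eq, List.length_ofFn]
      refine ⟨fun hω => ⟨fun i => ω i, fun i => by simp, hω⟩, fun ⟨_, _, hω⟩ => hω⟩
    rw [hfiber]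
    exact MeasurableSet.iUnion fun t => MeasurableSpace.measurableSet_generateFrom ⟨_, rfl⟩
  · rintro _ ⟨h, rfl⟩
    exact measurableSet_cyl h

lemma ext_of_cyl [Countable V] {μ ν : Measure (ℕ → V)} [IsFiniteMeasure μ]
    (h : ∀ h : List V, μ (cyl h) = ν (cyl h)) : μ = ν :=
  ext_of_generate_finite _ generateFrom_cyl isPiSystem_cyl (fun _ ⟨l, hl⟩ => hl ▸ h l)
    (by simpa [cyl_nil] using h [])

lemma measure_eval_eq_ite {μ : Measure (ℕ → V)} [IsProbabilityMeasure μ] {n : ℕ} {a : V}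
    (ha : μ {ω | ω n = a} = 1) (w : V) : μ {ω | ω n = w} = if w = a then 1 else 0 := by
  split_ifs with hwa
  · rwa [hwa]
  · exact measure_mono_null (fun ω hω hωa => hwa (hω.symm.trans hωa))
      ((prob_compl_eq_zero_iff (measurableSet_eval_eq n a)).2 ha)

lemma cond_map_eq_map_cond {α β : Type*} [MeasurableSpace α] [MeasurableSpace β] {f : α → β}
    (hf : Measurable f) (μ : Measure α) {s : Set β} (hs : MeasurableSet s) :
    (μ.map f)[|s] = (μ[|f ⁻¹' s]).map f := by
  ext t ht
  rw [cond_apply hs, Measure.map_apply hf ht, Measure.map_apply hf hs,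
    Measure.map_apply hf (hs.inter ht), cond_apply (hf hs), Set.preimage_inter]

lemma cond_map_shift_cyl_cons (μ : Measure (ℕ → V)) [IsFiniteMeasure μ] (v w : V)
    (t : List V) :
    ((μ[|cyl [v, w]]).map shift)[|cyl (w :: t)] = (μ[|cyl (v :: w :: t)]).map shift := by
  rw [cond_map_eq_map_cond measurable_shift _ (measurableSet_cyl _),
    cond_cond_eq_cond_inter (measurableSet_cyl _) (measurable_shift (measurableSet_cyl _)),
    cyl_pair_inter_shift_preimage]

lemma measure_shift_preimage_eq_sum [Fintype V] {μ : Measure (ℕ → V)} [IsProbabilityMeasure μ]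
    {v : V} (hv : μ (cyl [v]) = 1) {S : Set (ℕ → V)} (hS : MeasurableSet S) :
    μ (shift ⁻¹' S) = ∑ w, μ (cyl [v, w]) * (μ[|cyl [v, w]]).map shift S := by
  have hcyl : μ (cyl [v])ᶜ = 0 := (prob_compl_eq_zero_iff (measurableSet_cyl _)).2 hv
  calc μ (shift ⁻¹' S) = μ (⋃ w, shift ⁻¹' S ∩ cyl ([v] ++ [w])) := by
        rw [← Set.inter_iUnion, iUnion_cyl_append, measure_inter_conull hcyl]
    _ = ∑ w, μ (cyl [v, w] ∩ shift ⁻¹' S) := by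
        rw [measure_iUnion (fun w w' hne => (pairwise_disjoint_cyl_append [v] hne).mono
          Set.inter_subset_right Set.inter_subset_right)
          (fun w => (measurable_shift hS).inter (measurableSet_cyl _)), tsum_fintype]
        simp only [List.cons_append, List.nil_append, Set.inter_comm]
    _ = _ := by
        simp only [Measure.map_apply measurable_shift hS, mul_comm (μ (cyl _)),
          cond_mul_eq_inter (measurableSet_cyl _) _ μ]

end Cylinders

section Strategies

variable {V : Type}

/-- Moves from `v` to `w₀`, then plays `s w` from the second vertex `w` on; the fallback
`s w₀ [u]` only keeps it legal. -/
noncomputable def branch (v w₀ : V) (s : V → List V → V) : List V → V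
  | [u] => if u = v then w₀ else s w₀ [u]
  | _ :: w :: t => s w (w :: t)
  | [] => w₀

lemma branch_singleton (v w₀ : V) (s : V → List V → V) : branch v w₀ s [v] = w₀ :=
  if_pos rfl

variable [Fintype V] {G : Game V}

/-- `G.IsMaxStrategy` and `G.IsMinStrategy` are `G.IsStrategyOn G.VMax` and
`G.IsStrategyOn G.Vmin` by definition. -/
def Game.IsStrategyOn (G : Game V) (S : Set V) (s : List V → V) : Prop :=
  ∀ h : List V, G.FinitePlay h → ∀ u, h.getLast? = some u → u ∈ S → G.E u (s h)

lemma Game.FinitePlay.singleton (a : V) : G.FinitePlay [a] :=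
  ⟨List.cons_ne_nil a [], List.isChain_singleton a⟩

lemma Game.FinitePlay.cons {a b : V} {t : List V} (he : G.E a b) (hh : G.FinitePlay (b :: t)) :
    G.FinitePlay (a :: b :: t) :=
  ⟨List.cons_ne_nil _ _, List.isChain_cons_cons.2 ⟨he, hh.2⟩⟩

lemma Game.FinitePlay.tail {a b : V} {t : List V} (hh : G.FinitePlay (a :: b :: t)) :
    G.FinitePlay (b :: t) :=
  ⟨List.cons_ne_nil _ _, (List.isChain_cons_cons.1 hh.2).2⟩

lemma Game.FinitePlay.append {h : List V} {u w : V} (hh : G.FinitePlay h)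
    (hu : h.getLast? = some u) (he : G.E u w) : G.FinitePlay (h ++ [w]) := by
  refine ⟨by simp, List.isChain_append.2 ⟨hh.2, List.isChain_singleton w, ?_⟩⟩
  intro x hx y hy
  rw [hu, Option.mem_some_iff] at hx
  rw [List.head?_singleton, Option.mem_some_iff] at hy
  exact hx ▸ hy ▸ he

lemma Game.exists_isStrategyOn [Nonempty V] (G : Game V) : ∃ s, ∀ S, G.IsStrategyOn S s :=
  ⟨fun h => (G.succ_exists (h.getLastD (Classical.arbitrary V))).choose, fun _ h _ u hu _ => by
    simpa [List.getLastD_eq_getLast?, hu] using (G.succ_exists u).choose_spec⟩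

instance [Nonempty V] : Nonempty {σ // G.IsMaxStrategy σ} :=
  let ⟨s, hs⟩ := G.exists_isStrategyOn; ⟨⟨s, hs G.VMax⟩⟩

instance [Nonempty V] : Nonempty {τ // G.IsMinStrategy τ} :=
  let ⟨s, hs⟩ := G.exists_isStrategyOn; ⟨⟨s, hs G.Vmin⟩⟩

/-- The strategy `s` after a first vertex `v`; the fallback to `s h` only keeps it legal. -/
noncomputable def Game.residual (G : Game V) (s : List V → V) (v : V) : List V → V :=
  fun h => if G.FinitePlay (v :: h) then s (v :: h) else s h

lemma Game.IsStrategyOn.residual {S : Set V} {s : List V → V} (hs : G.IsStrategyOn S s)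
    (v : V) : G.IsStrategyOn S (G.residual s v) := by
  intro h hh u hu huS
  unfold Game.residual
  split_ifs with hv
  · obtain ⟨a, t, rfl⟩ := List.exists_cons_of_ne_nil hh.1
    exact hs _ hv u (by simpa [List.getLast?_cons_cons] using hu) huS
  · exact hs h hh u hu huS

lemma Game.IsStrategyOn.branch {S : Set V} {v w₀ : V} {s : V → List V → V}
    (hw₀ : v ∈ S → G.E v w₀) (hs : ∀ w, G.IsStrategyOn S (s w)) :
    G.IsStrategyOn S (branch v w₀ s) := by
  intro h hh u hu huS
  match h, hh, hu with
  | [a], hh, hu =>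
    obtain rfl : a = u := by simpa using hu
    show G.E a (if a = v then w₀ else s w₀ [a])
    split_ifs with hav
    · exact hav ▸ hw₀ (hav ▸ huS)
    · exact hs w₀ [a] hh a rfl huS
  | _ :: w :: t, hh, hu =>
    exact hs w (w :: t) hh.tail u (by simpa [List.getLast?_cons_cons] using hu) huS

lemma Game.residual_branch_eq {v w w₀ : V} {s : V → List V → V} {h : List V}
    (he : G.E v w) (hh : G.FinitePlay h) (hw : h.head? = some w) :
    G.residual (branch v w₀ s) v h = s w h := by
  obtain ⟨b, t, rfl⟩ := List.exists_cons_of_ne_nil hh.1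
  obtain rfl : b = w := by simpa using hw
  simp [Game.residual, hh.cons he, branch]

end Strategies

section NextProb

variable {V : Type} [Fintype V] (G : Game V)

/-- The law of the vertex following `u` when Max would move to `a` and min would move to `b`. -/
noncomputable def Game.nextProb (u a b w : V) : ℝ :=
  if u ∈ G.VMax then (if w = a then 1 else 0)
  else if u ∈ G.Vmin then (if w = b then 1 else 0)
  else G.p u w

variable {G} {u a b : V}

lemma Game.nextProb_of_mem_VMax (hu : u ∈ G.VMax) (w : V) :
    G.nextProb u a b w = if w = a then 1 else 0 :=
  if_pos hu

lemma Game.nextProb_of_mem_Vmin (hu : u ∈ G.Vmin) (w : V) :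
    G.nextProb u a b w = if w = b then 1 else 0 := by
  simp [Game.nextProb, hu, Set.disjoint_right.1 G.disjMm hu]

lemma Game.nextProb_of_mem_VR (hu : u ∈ G.VR) (w : V) : G.nextProb u a b w = G.p u w := by
  simp [Game.nextProb, Set.disjoint_right.1 G.disjMR hu, Set.disjoint_right.1 G.disjmR hu]

lemma Game.nextProb_nonneg (w : V) : 0 ≤ G.nextProb u a b w := by
  rcases G.cover u with hu | hu | hu
  · rw [G.nextProb_of_mem_VMax hu]; split_ifs <;> norm_num
  · rw [G.nextProb_of_mem_Vmin hu]; split_ifs <;> norm_num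
  · rw [G.nextProb_of_mem_VR hu]; exact G.p_nonneg u hu w

lemma Game.edge_of_nextProb_ne_zero {w : V} (ha : u ∈ G.VMax → G.E u a)
    (hb : u ∈ G.Vmin → G.E u b) (hw : G.nextProb u a b w ≠ 0) : G.E u w := by
  rcases G.cover u with hu | hu | hu
  · rw [G.nextProb_of_mem_VMax hu] at hw
    split_ifs at hw with hwa
    exacts [hwa ▸ ha hu, absurd rfl hw]
  · rw [G.nextProb_of_mem_Vmin hu] at hw
    split_ifs at hw with hwb
    exacts [hwb ▸ hb hu, absurd rfl hw]
  · rw [G.nextProb_of_mem_VR hu] at hw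
    exact (G.p_pos_iff u hu w).1 ((G.p_nonneg u hu w).lt_of_ne' hw)

end NextProb

section InducedMeasure

variable {V : Type} [Fintype V] [MeasurableSpace V] [MeasurableSingletonClass V] {G : Game V}
  {σ τ : List V → V} {v : V} {μ : Measure (ℕ → V)}

lemma Game.IsInduced.cond_eq_nextProb (hμ : G.IsInduced σ τ v μ) {h : List V} {u : V}
    (hu : h.getLast? = some u) (hh : μ (cyl h) ≠ 0) (w : V) :
    μ[{ω | ω h.length = w} | cyl h] = ENNReal.ofReal (G.nextProb u (σ h) (τ h) w) := by
  have := hμ.1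
  have := cond_isProbabilityMeasure hh
  obtain ⟨hMax, hmin, hR⟩ := hμ.2.2 h u hu hh
  rcases G.cover u with hu | hu | hu
  · rw [G.nextProb_of_mem_VMax hu, measure_eval_eq_ite (hMax hu)]
    split_ifs <;> simp
  · rw [G.nextProb_of_mem_Vmin hu, measure_eval_eq_ite (hmin hu)]
    split_ifs <;> simp
  · rw [G.nextProb_of_mem_VR hu]
    exact hR hu w

lemma Game.IsInduced.measure_cyl_append (hμ : G.IsInduced σ τ v μ) {h : List V} {u : V}
    (hu : h.getLast? = some u) (w : V) :
    μ (cyl (h ++ [w])) = ENNReal.ofReal (G.nextProb u (σ h) (τ h) w) * μ (cyl h) := by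
  have := hμ.1
  by_cases hh : μ (cyl h) = 0
  · rw [hh, mul_zero]
    exact measure_mono_null (by rw [cyl_append]; exact Set.inter_subset_left) hh
  · rw [← hμ.cond_eq_nextProb hu hh, cond_mul_eq_inter (measurableSet_cyl h), cyl_append]

lemma Game.IsInduced.measure_cyl_singleton (hμ : G.IsInduced σ τ v μ) (a : V) :
    μ (cyl [a]) = if a = v then 1 else 0 := by
  have := hμ.1
  rw [cyl_singleton]
  exact measure_eval_eq_ite hμ.2.1 a

lemma Game.IsInduced.measure_cyl_pair (hμ : G.IsInduced σ τ v μ) (w : V) :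
    μ (cyl [v, w]) = ENNReal.ofReal (G.nextProb v (σ [v]) (τ [v]) w) := by
  rw [← List.singleton_append, hμ.measure_cyl_append (u := v) rfl, hμ.measure_cyl_singleton,
    if_pos rfl, mul_one]

lemma Game.IsInduced.finitePlay_of_measure_cyl_ne_zero (hμ : G.IsInduced σ τ v μ)
    (hσ : G.IsMaxStrategy σ) (hτ : G.IsMinStrategy τ) {h : List V} (hne : h ≠ [])
    (hh : μ (cyl h) ≠ 0) : G.FinitePlay h ∧ h.head? = some v := by
  induction h using List.reverseRecOn with
  | nil => exact absurd rfl hne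
  | append_singleton l a ih =>
    cases l with
    | nil =>
      rw [List.nil_append, hμ.measure_cyl_singleton] at hh
      obtain rfl : a = v := by by_contra hav; exact hh (if_neg hav)
      exact ⟨.singleton a, rfl⟩
    | cons b t =>
      obtain ⟨u, hu⟩ : ∃ u, (b :: t).getLast? = some u := Option.isSome_iff_exists.1 rfl
      rw [hμ.measure_cyl_append hu] at hh
      obtain ⟨hp, hl⟩ := mul_ne_zero_iff.1 hh
      obtain ⟨hplay, hhead⟩ := ih (List.cons_ne_nil b t) hl
      have he : G.E u a := G.edge_of_nextProb_ne_zero (hσ _ hplay u hu) (hτ _ hplay u hu)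
        fun h0 => hp (by rw [h0, ENNReal.ofReal_zero])
      exact ⟨hplay.append hu he, by simpa using hhead⟩

lemma Game.IsInduced.eq_of_agree {σ' τ' : List V → V} {ν : Measure (ℕ → V)}
    (hμ : G.IsInduced σ τ v μ) (hν : G.IsInduced σ' τ' v ν) (hσ : G.IsMaxStrategy σ)
    (hτ : G.IsMinStrategy τ)
    (hagree : ∀ h, G.FinitePlay h → h.head? = some v → σ h = σ' h ∧ τ h = τ' h) :
    μ = ν := by
  have := hμ.1
  have := hν.1
  refine ext_of_cyl fun h => ?_
  induction h using List.reverseRecOn with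
  | nil => simp [cyl_nil]
  | append_singleton l a ih =>
    cases l with
    | nil => rw [List.nil_append, hμ.measure_cyl_singleton, hν.measure_cyl_singleton]
    | cons b t =>
      obtain ⟨u, hu⟩ : ∃ u, (b :: t).getLast? = some u := Option.isSome_iff_exists.1 rfl
      rw [hμ.measure_cyl_append hu, hν.measure_cyl_append hu, ← ih]
      by_cases hl : μ (cyl (b :: t)) = 0
      · rw [hl, mul_zero, mul_zero]
      · obtain ⟨hplay, hhead⟩ :=
          hμ.finitePlay_of_measure_cyl_ne_zero hσ hτ (List.cons_ne_nil b t) hl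
        obtain ⟨hσσ', hττ'⟩ := hagree _ hplay hhead
        rw [hσσ', hττ']

lemma Game.IsInduced.map_shift_cond_cyl_pair (hμ : G.IsInduced σ τ v μ)
    (hσ : G.IsMaxStrategy σ) (hτ : G.IsMinStrategy τ) {w : V} (hw : μ (cyl [v, w]) ≠ 0) :
    G.IsInduced (G.residual σ v) (G.residual τ v) w ((μ[|cyl [v, w]]).map shift) := by
  have := hμ.1
  have := cond_isProbabilityMeasure hw
  have hC := measurableSet_cyl [v, w]
  have hmap (S : Set (ℕ → V)) (hS : MeasurableSet S) :
      (μ[|cyl [v, w]]).map shift S =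
        (μ (cyl [v, w]))⁻¹ * μ (cyl [v, w] ∩ shift ⁻¹' S) := by
    rw [Measure.map_apply measurable_shift hS, cond_apply hC]
  refine ⟨Measure.isProbabilityMeasure_map measurable_shift.aemeasurable, ?_,
    fun h u hu hh => ?_⟩
  · have hsub : cyl [v, w] ⊆ shift ⁻¹' {ω | ω 0 = w} := fun ω hω => hω ⟨1, by simp⟩
    rw [hmap _ (measurableSet_eval_eq 0 w), Set.inter_eq_left.2 hsub,
      ENNReal.inv_mul_cancel hw (measure_ne_top _ _)]
  obtain ⟨b, t, rfl⟩ :=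
    List.exists_cons_of_ne_nil (List.ne_nil_of_mem (List.mem_of_getLast? hu))
  obtain rfl : b = w := by
    by_contra hb
    rw [hmap _ (measurableSet_cyl _), cyl_pair_inter_shift_preimage_of_ne hb, measure_empty,
      mul_zero] at hh
    exact hh rfl
  rw [hmap _ (measurableSet_cyl _), cyl_pair_inter_shift_preimage] at hh
  have hD : μ (cyl (v :: b :: t)) ≠ 0 := right_ne_zero_of_mul hh
  have hplay := (hμ.finitePlay_of_measure_cyl_ne_zero hσ hτ (List.cons_ne_nil _ _) hD).1
  have hcond (x : V) : ((μ[|cyl [v, b]]).map shift)[{q | q (b :: t).length = x} | cyl (b :: t)] =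
      μ[{ω | ω (v :: b :: t).length = x} | cyl (v :: b :: t)] := by
    rw [cond_map_shift_cyl_cons, Measure.map_apply measurable_shift (measurableSet_eval_eq _ _)]
    rfl
  have hres (s : List V → V) : G.residual s v (b :: t) = s (v :: b :: t) := if_pos hplay
  obtain ⟨hMax, hmin, hR⟩ := hμ.2.2 (v :: b :: t) u (by simpa using hu) hD
  exact ⟨fun hu => by rw [hcond, hres]; exact hMax hu,
    fun hu => by rw [hcond, hres]; exact hmin hu, fun hu x => by rw [hcond]; exact hR hu x⟩

variable {W : Set (ℕ → V)} {P : StratFam V}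

lemma Game.IsInducedFam.measure_eq_sum (hP : G.IsInducedFam P) (hW : MeasurableSet W)
    (hTail : IsTail W) (hσ : G.IsMaxStrategy σ) (hτ : G.IsMinStrategy τ) (v : V) :
    P σ τ v W = ∑ w, ENNReal.ofReal (G.nextProb v (σ [v]) (τ [v]) w) *
      P (G.residual σ v) (G.residual τ v) w W := by
  have hμ := hP σ τ v
  have := hμ.1
  have hshift : shift ⁻¹' W = W := Set.ext hTail.shift_mem_iff
  calc P σ τ v W = P σ τ v (shift ⁻¹' W) := by rw [hshift]
    _ = _ := by
      rw [measure_shift_preimage_eq_sum (by simpa using hμ.measure_cyl_singleton v) hW]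
      refine Finset.sum_congr rfl fun w _ => ?_
      rw [← hμ.measure_cyl_pair]
      by_cases hw : P σ τ v (cyl [v, w]) = 0
      · rw [hw, zero_mul, zero_mul]
      · rw [(hμ.map_shift_cond_cyl_pair hσ hτ hw).eq_of_agree (hP _ _ w)
          (Game.IsStrategyOn.residual hσ v) (Game.IsStrategyOn.residual hτ v)
          fun _ _ _ => ⟨rfl, rfl⟩]

lemma Game.IsInducedFam.toReal_measure_eq_sum (hP : G.IsInducedFam P) (hW : MeasurableSet W)
    (hTail : IsTail W) (hσ : G.IsMaxStrategy σ) (hτ : G.IsMinStrategy τ) (v : V) :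
    (P σ τ v W).toReal = ∑ w, G.nextProb v (σ [v]) (τ [v]) w *
      (P (G.residual σ v) (G.residual τ v) w W).toReal := by
  have hfin (w : V) : P (G.residual σ v) (G.residual τ v) w W ≠ ⊤ :=
    have := (hP (G.residual σ v) (G.residual τ v) w).1
    measure_ne_top _ _
  rw [hP.measure_eq_sum hW hTail hσ hτ v,
    ENNReal.toReal_sum fun w _ => ENNReal.mul_ne_top ENNReal.ofReal_ne_top (hfin w)]
  simp only [ENNReal.toReal_mul, ENNReal.toReal_ofReal (G.nextProb_nonneg _)]

end InducedMeasure

section Value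

variable {V : Type} [Fintype V] [MeasurableSpace V] {G : Game V} {W : Set (ℕ → V)}
  {P : StratFam V}

lemma bddBelow_range_toReal {ι : Type*} (f : ι → ENNReal) :
    BddBelow (Set.range fun i => (f i).toReal) :=
  ⟨0, by rintro _ ⟨i, rfl⟩; exact ENNReal.toReal_nonneg⟩

lemma Game.IsInducedFam.toReal_le_one (hP : G.IsInducedFam P) (σ τ : List V → V) (u : V) :
    (P σ τ u W).toReal ≤ 1 := by
  have := (hP σ τ u).1
  exact ENNReal.toReal_le_of_le_ofReal zero_le_one (by simpa using prob_le_one)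

lemma Game.IsInducedFam.iInf_le_val (hP : G.IsInducedFam P) {σ : List V → V}
    (hσ : G.IsMaxStrategy σ) (u : V) :
    ⨅ τ : {τ // G.IsMinStrategy τ}, (P σ τ.1 u W).toReal ≤ G.val W P u := by
  have : Nonempty V := ⟨u⟩
  refine le_ciSup (f := fun σ : {σ // G.IsMaxStrategy σ} =>
    ⨅ τ : {τ // G.IsMinStrategy τ}, (P σ.1 τ.1 u W).toReal) ⟨1, ?_⟩ ⟨σ, hσ⟩
  rintro _ ⟨σ', rfl⟩
  exact (ciInf_le (bddBelow_range_toReal _) (Classical.arbitrary _)).trans (hP.toReal_le_one _ _ _)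

lemma Game.val_le_of_forall_exists {u : V} {c : ℝ}
    (h : ∀ σ, G.IsMaxStrategy σ → ∀ ε > 0,
      ∃ τ, G.IsMinStrategy τ ∧ (P σ τ u W).toReal ≤ c + ε) :
    G.val W P u ≤ c := by
  have : Nonempty V := ⟨u⟩
  refine ciSup_le fun ⟨σ, hσ⟩ => le_of_forall_pos_le_add fun ε hε => ?_
  obtain ⟨τ, hτ, hle⟩ := h σ hσ ε hε
  exact (ciInf_le (bddBelow_range_toReal _) ⟨τ, hτ⟩).trans hle

lemma Game.IsInducedFam.le_val_of_forall_exists (hP : G.IsInducedFam P) {u : V} {c : ℝ}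
    (h : ∀ ε > 0, ∃ σ, G.IsMaxStrategy σ ∧
      ∀ τ, G.IsMinStrategy τ → c - ε ≤ (P σ τ u W).toReal) :
    c ≤ G.val W P u := by
  have : Nonempty V := ⟨u⟩
  refine le_of_forall_sub_le fun ε hε => ?_
  obtain ⟨σ, hσ, hle⟩ := h ε hε
  calc c - ε ≤ ⨅ τ : {τ // G.IsMinStrategy τ}, (P σ τ.1 u W).toReal :=
        le_ciInf fun τ => hle τ.1 τ.2
    _ ≤ G.val W P u := hP.iInf_le_val hσ u

lemma Game.IsInducedFam.exists_toReal_lt_val_add (hP : G.IsInducedFam P) {σ : List V → V}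
    (hσ : G.IsMaxStrategy σ) (u : V) {ε : ℝ} (hε : 0 < ε) :
    ∃ τ, G.IsMinStrategy τ ∧ (P σ τ u W).toReal < G.val W P u + ε := by
  have : Nonempty V := ⟨u⟩
  obtain ⟨⟨τ, hτ⟩, hlt⟩ :=
    exists_lt_of_ciInf_lt ((hP.iInf_le_val hσ u).trans_lt (lt_add_of_pos_right _ hε))
  exact ⟨τ, hτ, hlt⟩

lemma Game.exists_val_sub_lt_toReal (u : V) {ε : ℝ} (hε : 0 < ε) :
    ∃ σ, G.IsMaxStrategy σ ∧
      ∀ τ, G.IsMinStrategy τ → G.val W P u - ε < (P σ τ u W).toReal := by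
  have : Nonempty V := ⟨u⟩
  have hlt : G.val W P u - ε < ⨆ σ : {σ // G.IsMaxStrategy σ},
      ⨅ τ : {τ // G.IsMinStrategy τ}, (P σ.1 τ.1 u W).toReal := sub_lt_self _ hε
  obtain ⟨⟨σ, hσ⟩, hlt⟩ := exists_lt_of_lt_ciSup hlt
  exact ⟨σ, hσ, fun τ hτ => hlt.trans_le (ciInf_le (bddBelow_range_toReal _)
    (⟨τ, hτ⟩ : {τ // G.IsMinStrategy τ}))⟩

variable [MeasurableSingletonClass V]

lemma Game.IsInducedFam.exists_minStrategy_toReal_le (hP : G.IsInducedFam P)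
    (hW : MeasurableSet W) (hTail : IsTail W) {σ : List V → V} (hσ : G.IsMaxStrategy σ)
    {v w₀ : V} (hw₀ : G.E v w₀) {ε : ℝ} (hε : 0 < ε) :
    ∃ τ, G.IsMinStrategy τ ∧
      (P σ τ v W).toReal ≤ ∑ w, G.nextProb v (σ [v]) w₀ w * (G.val W P w + ε) := by
  choose ρ hρ hρlt using fun w =>
    hP.exists_toReal_lt_val_add (Game.IsStrategyOn.residual hσ v) w hε
  have hτ : G.IsMinStrategy (branch v w₀ ρ) := Game.IsStrategyOn.branch (fun _ => hw₀) hρ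
  refine ⟨branch v w₀ ρ, hτ, ?_⟩
  rw [hP.toReal_measure_eq_sum hW hTail hσ hτ, branch_singleton]
  refine Finset.sum_le_sum fun w _ => ?_
  by_cases hp : G.nextProb v (σ [v]) w₀ w = 0
  · rw [hp, zero_mul, zero_mul]
  have he : G.E v w :=
    G.edge_of_nextProb_ne_zero (hσ [v] (.singleton v) v rfl) (fun _ => hw₀) hp
  rw [(hP _ _ w).eq_of_agree (hP (G.residual σ v) (ρ w) w) (Game.IsStrategyOn.residual hσ v)
    (Game.IsStrategyOn.residual hτ v)
    fun h hh hhead => ⟨rfl, G.residual_branch_eq he hh hhead⟩]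
  exact mul_le_mul_of_nonneg_left (hρlt w).le (G.nextProb_nonneg w)

lemma Game.IsInducedFam.exists_maxStrategy_le_toReal (hP : G.IsInducedFam P)
    (hW : MeasurableSet W) (hTail : IsTail W) {v w₀ : V} (hw₀ : G.E v w₀) {ε : ℝ}
    (hε : 0 < ε) :
    ∃ σ, G.IsMaxStrategy σ ∧ ∀ τ, G.IsMinStrategy τ →
      ∑ w, G.nextProb v w₀ (τ [v]) w * (G.val W P w - ε) ≤ (P σ τ v W).toReal := by
  choose s hs hslt using fun w => G.exists_val_sub_lt_toReal (W := W) (P := P) w hε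
  have hσ : G.IsMaxStrategy (branch v w₀ s) := Game.IsStrategyOn.branch (fun _ => hw₀) hs
  refine ⟨branch v w₀ s, hσ, fun τ hτ => ?_⟩
  rw [hP.toReal_measure_eq_sum hW hTail hσ hτ, branch_singleton]
  refine Finset.sum_le_sum fun w _ => ?_
  by_cases hp : G.nextProb v w₀ (τ [v]) w = 0
  · rw [hp, zero_mul, zero_mul]
  have he : G.E v w :=
    G.edge_of_nextProb_ne_zero (fun _ => hw₀) (hτ [v] (.singleton v) v rfl) hp
  rw [(hP _ _ w).eq_of_agree (hP (s w) (G.residual τ v) w) (Game.IsStrategyOn.residual hσ v)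
    (Game.IsStrategyOn.residual hτ v)
    fun h hh hhead => ⟨G.residual_branch_eq he hh hhead, rfl⟩]
  exact mul_le_mul_of_nonneg_left (hslt w _ (Game.IsStrategyOn.residual hτ v)).le
    (G.nextProb_nonneg w)

lemma Game.IsInducedFam.val_eq_iSup_of_mem_VMax (hP : G.IsInducedFam P) (hW : MeasurableSet W)
    (hTail : IsTail W) {v : V} (hv : v ∈ G.VMax) :
    G.val W P v = ⨆ w : {w // G.E v w}, G.val W P w.1 := by
  have : Nonempty {w // G.E v w} := let ⟨w, hw⟩ := G.succ_exists v; ⟨⟨w, hw⟩⟩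
  refine le_antisymm (G.val_le_of_forall_exists fun σ hσ ε hε => ?_)
    (ciSup_le fun ⟨w, hw⟩ => hP.le_val_of_forall_exists fun ε hε => ?_)
  · have hw : G.E v (σ [v]) := hσ [v] (.singleton v) v rfl hv
    obtain ⟨τ, hτ, hle⟩ := hP.exists_minStrategy_toReal_le hW hTail hσ hw hε
    refine ⟨τ, hτ, hle.trans ?_⟩
    simpa [G.nextProb_of_mem_VMax hv] using le_ciSup
      (f := fun w : {w // G.E v w} => G.val W P w.1) (Set.finite_range _).bddAbove ⟨_, hw⟩
  · obtain ⟨σ, hσ, hle⟩ := hP.exists_maxStrategy_le_toReal hW hTail hw hε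
    exact ⟨σ, hσ, fun τ hτ => by simpa [G.nextProb_of_mem_VMax hv] using hle τ hτ⟩

lemma Game.IsInducedFam.val_eq_iInf_of_mem_Vmin (hP : G.IsInducedFam P) (hW : MeasurableSet W)
    (hTail : IsTail W) {v : V} (hv : v ∈ G.Vmin) :
    G.val W P v = ⨅ w : {w // G.E v w}, G.val W P w.1 := by
  have : Nonempty {w // G.E v w} := let ⟨w, hw⟩ := G.succ_exists v; ⟨⟨w, hw⟩⟩
  refine le_antisymm (le_ciInf fun ⟨w, hw⟩ => G.val_le_of_forall_exists fun σ hσ ε hε => ?_)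
    (hP.le_val_of_forall_exists fun ε hε => ?_)
  · obtain ⟨τ, hτ, hle⟩ := hP.exists_minStrategy_toReal_le hW hTail hσ hw hε
    exact ⟨τ, hτ, by simpa [G.nextProb_of_mem_Vmin hv] using hle⟩
  · obtain ⟨w, hw⟩ := G.succ_exists v
    obtain ⟨σ, hσ, hle⟩ := hP.exists_maxStrategy_le_toReal hW hTail hw hε
    refine ⟨σ, hσ, fun τ hτ => le_trans ?_ (hle τ hτ)⟩
    rw [Finset.sum_congr rfl fun w _ => by rw [G.nextProb_of_mem_Vmin hv]]
    simpa using ciInf_le (f := fun w : {w // G.E v w} => G.val W P w.1)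
      (Set.finite_range _).bddBelow ⟨_, hτ [v] (.singleton v) v rfl hv⟩

lemma Game.IsInducedFam.val_eq_sum_of_mem_VR (hP : G.IsInducedFam P) (hW : MeasurableSet W)
    (hTail : IsTail W) {v : V} (hv : v ∈ G.VR) :
    G.val W P v = ∑ w, G.p v w * G.val W P w := by
  obtain ⟨w₀, hw₀⟩ := G.succ_exists v
  have hsum (c : ℝ) : ∑ w, G.p v w * (G.val W P w + c) = ∑ w, G.p v w * G.val W P w + c := by
    simp [mul_add, Finset.sum_add_distrib, ← Finset.sum_mul, G.p_sum v hv]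
  refine le_antisymm (G.val_le_of_forall_exists fun σ hσ ε hε => ?_)
    (hP.le_val_of_forall_exists fun ε hε => ?_)
  · obtain ⟨τ, hτ, hle⟩ := hP.exists_minStrategy_toReal_le hW hTail hσ hw₀ hε
    exact ⟨τ, hτ, by simpa [G.nextProb_of_mem_VR hv, hsum] using hle⟩
  · obtain ⟨σ, hσ, hle⟩ := hP.exists_maxStrategy_le_toReal hW hTail hw₀ hε
    exact ⟨σ, hσ, fun τ hτ => by
      simpa [G.nextProb_of_mem_VR hv, sub_eq_add_neg, hsum] using hle τ hτ⟩

end Value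

variable {V : Type} [Fintype V] [MeasurableSpace V] [DiscreteMeasurableSpace V]

/-- in a game with a tail winning condition, the value is a fixed point of the
one-step (max / min / average) operator. -/
theorem val_fixed_point
    (G : Game V) (W : Set (ℕ → V)) (hW : MeasurableSet W) (hTail : IsTail W)
    (P : StratFam V) (hP : G.IsInducedFam P) (v : V) :
    (v ∈ G.VMax → G.val W P v = ⨆ w : {w // G.E v w}, G.val W P w.1) ∧
    (v ∈ G.Vmin → G.val W P v = ⨅ w : {w // G.E v w}, G.val W P w.1) ∧
    (v ∈ G.VR → G.val W P v =
      ∑ w ∈ Finset.univ.filter (fun w => G.E v w), G.p v w * G.val W P w) := by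
  refine ⟨hP.val_eq_iSup_of_mem_VMax hW hTail, hP.val_eq_iInf_of_mem_Vmin hW hTail,
    fun hv => ?_⟩
  rw [hP.val_eq_sum_of_mem_VR hW hTail hv, Finset.sum_filter_of_ne]
  exact fun w _ hw => (G.p_pos_iff v hv w).1
    ((G.p_nonneg v hv w).lt_of_ne' (left_ne_zero_of_mul hw))

end StochasticGames
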